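/- For every functional unit H for ℕ whose interface consists of a single method name, there do not exist instruction sequences P1 and P2 over I(H) such that ⌈P1⌉_H = Incr and ⌈P2⌉_H = Decr; consequently, Counter ≤ H fails for every such H. -/

import Mathlib

/-- Primitive instructions: plain basic `f.m`, positive test `+f.m`, negative test `-f.m`
(method names are natural numbers, there is a single focus `f`), forward jump `#l`,
backward jump `\l`, and the positive/negative termination instructions `!t` / `!f`. -/
inductive Instr : Type where
  | basic (m : ℕ)
  | postest (m : ℕ)
  | negtest (m : ℕ)
  | fjump (l : ℕ)
  | bjump (l : ℕ)
  | haltT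
  | haltF
deriving DecidableEq

/-- A functional unit for a state space `S`: a finite, functional set of
(method name, method operation) pairs, where a method operation is a total
function `S → Bool × S`. -/
structure FU (S : Type*) where
  carrier : Set (ℕ × (S → Bool × S))
  finite : carrier.Finite
  functional : ∀ {m : ℕ} {M M' : S → Bool × S},
    (m, M) ∈ carrier → (m, M') ∈ carrier → M = M'

/-- The interface of a functional unit: the set of method names occurring in it. -/
def FU.iface {S : Type*} (H : FU S) : Set ℕ := {m | ∃ M, (m, M) ∈ H.carrier}

/-- The method operation named `m` in `H` (an arbitrary fixed value if `m ∉ I(H)`). -/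
noncomputable def FU.op {S : Type*} (H : FU S) (m : ℕ) (s : S) : Bool × S :=
  letI := Classical.propDecidable
  if h : ∃ M, (m, M) ∈ H.carrier then h.choose s else (true, s)

/-- The restriction `⟨I, H⟩` of a functional unit to a set `I` of method names. -/
def FU.restrict {S : Type*} (H : FU S) (I : Set ℕ) : FU S where
  carrier := {p ∈ H.carrier | p.1 ∈ I}
  finite := H.finite.subset (Set.sep_subset _ _)
  functional := fun hM hM' => H.functional hM.1 hM'.1

/-- The method names used by an instruction all belong to `I`. -/
def Instr.namesIn (I : Set ℕ) : Instr → Prop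
  | .basic m => m ∈ I
  | .postest m => m ∈ I
  | .negtest m => m ∈ I
  | _ => True

/-- An instruction sequence over a set `I` of method names: a finite nonempty list of
primitive instructions whose method names belong to `I`. -/
def InstrSeqOver (I : Set ℕ) (x : List Instr) : Prop :=
  x ≠ [] ∧ ∀ u ∈ x, u.namesIn I

/-- `Exec H x i s b s'` : execution of the instruction sequence `x` on the functional
unit `H`, from (0-based) position `i` in state `s`, terminates delivering the Boolean
value `b` with final state `s'`.  (Position `i` here corresponds to the 1-based
position `i+1`; positions outside the sequence, jumps `#0`/`\0`, and infinite
executions admit no derivation, i.e. execution does not terminate.) -/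
inductive Exec {S : Type*} (H : FU S) (x : List Instr) : ℕ → S → Bool → S → Prop where
  | basic {i : ℕ} {s : S} {b : Bool} {s' : S} (m : ℕ)
      (hu : x[i]? = some (Instr.basic m))
      (h : Exec H x (i + 1) (H.op m s).2 b s') : Exec H x i s b s'
  | posT {i : ℕ} {s : S} {b : Bool} {s' : S} (m : ℕ)
      (hu : x[i]? = some (Instr.postest m)) (hr : (H.op m s).1 = true)
      (h : Exec H x (i + 1) (H.op m s).2 b s') : Exec H x i s b s'
  | posF {i : ℕ} {s : S} {b : Bool} {s' : S} (m : ℕ)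
      (hu : x[i]? = some (Instr.postest m)) (hr : (H.op m s).1 = false)
      (h : Exec H x (i + 2) (H.op m s).2 b s') : Exec H x i s b s'
  | negT {i : ℕ} {s : S} {b : Bool} {s' : S} (m : ℕ)
      (hu : x[i]? = some (Instr.negtest m)) (hr : (H.op m s).1 = true)
      (h : Exec H x (i + 2) (H.op m s).2 b s') : Exec H x i s b s'
  | negF {i : ℕ} {s : S} {b : Bool} {s' : S} (m : ℕ)
      (hu : x[i]? = some (Instr.negtest m)) (hr : (H.op m s).1 = false)
      (h : Exec H x (i + 1) (H.op m s).2 b s') : Exec H x i s b s'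
  | fjump {i : ℕ} {s : S} {b : Bool} {s' : S} (l : ℕ)
      (hu : x[i]? = some (Instr.fjump l))
      (h : Exec H x (i + l) s b s') : Exec H x i s b s'
  | bjump {i : ℕ} {s : S} {b : Bool} {s' : S} (l : ℕ)
      (hu : x[i]? = some (Instr.bjump l)) (hl : l ≤ i)
      (h : Exec H x (i - l) s b s') : Exec H x i s b s'
  | haltT {i : ℕ} {s : S} (hu : x[i]? = some Instr.haltT) : Exec H x i s true s
  | haltF {i : ℕ} {s : S} (hu : x[i]? = some Instr.haltF) : Exec H x i s false s

/-- `M` is a derived method operation of `H`: there is an instruction sequence `x`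
over `I(H)` whose produced partial method operation `⌈x⌉_H` is total and equals `M`. -/
def DerivedOp {S : Type*} (H : FU S) (M : S → Bool × S) : Prop :=
  ∃ x : List Instr, InstrSeqOver H.iface x ∧ ∀ s, Exec H x 0 s (M s).1 (M s).2

/-- `H ≤ H'` : every method operation of `H` is a derived method operation of `H'`. -/
def FU.le {S : Type*} (H H' : FU S) : Prop :=
  ∀ m M, (m, M) ∈ H.carrier → DerivedOp H' M

/-- `H ≡ H'` : `H ≤ H'` and `H' ≤ H`. -/
def FU.equiv {S : Type*} (H H' : FU S) : Prop := FU.le H H' ∧ FU.le H' H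

/-- A method operation on ℕ is computable if both its components are. -/
def ComputableMO (M : ℕ → Bool × ℕ) : Prop :=
  Computable (fun n => (M n).1) ∧ Computable (fun n => (M n).2)

/-- A functional unit for ℕ is computable if all its method operations are. -/
def ComputableFU (H : FU ℕ) : Prop :=
  ∀ m M, (m, M) ∈ H.carrier → ComputableMO M

/-- Setzero(x) = (true, 0). -/
def Setzero : ℕ → Bool × ℕ := fun _ => (true, 0)

/-- Incr(x) = (true, x+1). -/
def Incr : ℕ → Bool × ℕ := fun x => (true, x + 1)

/-- Decr(x) = (true, x−1) for x > 0, Decr(0) = (false, 0). -/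
def Decr : ℕ → Bool × ℕ := fun x => if x = 0 then (false, 0) else (true, x - 1)

/-- Iszero(x) = (true, x) for x = 0, (false, x) for x > 0. -/
def Iszero : ℕ → Bool × ℕ := fun x => if x = 0 then (true, x) else (false, x)

/-- The unbounded counter functional unit, with method names
setzero = 0, incr = 1, decr = 2, iszero = 3. -/
def Counter : FU ℕ where
  carrier := {(0, Setzero), (1, Incr), (2, Decr), (3, Iszero)}
  finite := (((Set.finite_singleton _).insert _).insert _).insert _
  functional := by
    rintro m M M' hM hM'
    simp only [Set.mem_insert_iff, Set.mem_singleton_iff, Prod.mk.injEq] at hM hM'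
    rcases hM with ⟨rfl, rfl⟩ | ⟨rfl, rfl⟩ | ⟨rfl, rfl⟩ | ⟨rfl, rfl⟩ <;>
      rcases hM' with ⟨h, rfl⟩ | ⟨h, rfl⟩ | ⟨h, rfl⟩ | ⟨h, rfl⟩ <;>
        first | rfl | simp at h

/-!
With a single method `m`, every instruction of a program applies the effect `e` of `m`, so a
terminating run ends in some iterate `e^[k] s` of its initial state, whatever the tests reply.
An `Incr` program thus lets `e` climb from every `n` to `n + 1`, so the `e`-orbit of `0` is all
of `ℕ`; a `Decr` program then brings `1` back to `0`, so `0` is periodic and its orbit finite.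
-/

theorem Exec.exists_iterate_eq {S : Type*} {H : FU S} {m : ℕ} {x : List Instr}
    (hx : ∀ u ∈ x, u.namesIn {m}) {i : ℕ} {s : S} {b : Bool} {s' : S}
    (hexec : Exec H x i s b s') : ∃ k, (fun t => (H.op m t).2)^[k] s = s' := by
  induction hexec with
  | basic m' hu _ ih | posT m' hu _ _ ih | posF m' hu _ _ ih | negT m' hu _ _ ih
  | negF m' hu _ _ ih =>
    obtain rfl : m' = m := hx _ (List.mem_of_getElem? hu)
    obtain ⟨k, hk⟩ := ih
    exact ⟨k + 1, hk⟩
  | fjump _ _ _ ih | bjump _ _ _ _ ih => exact ih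
  | haltT | haltF => exact ⟨0, rfl⟩

theorem Function.IsPeriodicPt.finite_range_iterate {α : Type*} {f : α → α} {n : ℕ} {x : α}
    (h : Function.IsPeriodicPt f n x) (hn : 0 < n) : (Set.range fun j => f^[j] x).Finite :=
  (Set.finite_range fun j : Fin n => f^[j] x).subset <| by
    rintro _ ⟨j, rfl⟩
    exact ⟨⟨j % n, Nat.mod_lt _ hn⟩, h.iterate_mod_apply j⟩

theorem iterate_one_ne_zero_of_forall_exists_iterate_eq_succ {f : ℕ → ℕ}
    (hsucc : ∀ s, ∃ k, f^[k] s = s + 1) (k : ℕ) : f^[k] 1 ≠ 0 := by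
  intro hk
  obtain ⟨a, ha⟩ := hsucc 0
  have ha_pos : 0 < a := Nat.pos_of_ne_zero <| by rintro rfl; simp at ha
  have hperiodic : Function.IsPeriodicPt f (k + a) 0 := by
    rw [Function.IsPeriodicPt, Function.IsFixedPt, Function.iterate_add_apply, ha, hk]
  have hrange : Set.range (fun j => f^[j] 0) = Set.univ := by
    refine Set.eq_univ_of_forall fun n => ?_
    induction n with
    | zero => exact ⟨0, rfl⟩
    | succ n ih =>
      obtain ⟨j, rfl⟩ := ih
      obtain ⟨l, hl⟩ := hsucc (f^[j] 0)
      exact ⟨l + j, (Function.iterate_add_apply f l j 0).trans hl⟩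
  exact Set.infinite_univ (hrange ▸ hperiodic.finite_range_iterate (by omega))

/-- For every functional unit `H` for ℕ whose interface is a single method name,
there are no instruction sequences `P1`, `P2` over `I(H)` with `⌈P1⌉_H = Incr` and
`⌈P2⌉_H = Decr`; consequently `Counter ≤ H` fails. -/
theorem no_incr_decr_one_method (H : FU ℕ) (h : ∃ m : ℕ, FU.iface H = {m}) :
    (¬ ∃ P1 P2 : List Instr, InstrSeqOver H.iface P1 ∧ InstrSeqOver H.iface P2 ∧
        (∀ s, Exec H P1 0 s (Incr s).1 (Incr s).2) ∧
        (∀ s, Exec H P2 0 s (Decr s).1 (Decr s).2)) ∧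
      ¬ FU.le Counter H := by
  obtain ⟨m, hm⟩ := h
  have hno : ¬ ∃ P1 P2 : List Instr, InstrSeqOver H.iface P1 ∧ InstrSeqOver H.iface P2 ∧
      (∀ s, Exec H P1 0 s (Incr s).1 (Incr s).2) ∧
      (∀ s, Exec H P2 0 s (Decr s).1 (Decr s).2) := by
    rintro ⟨P1, P2, ⟨-, h1⟩, ⟨-, h2⟩, hIncr, hDecr⟩
    rw [hm] at h1 h2
    obtain ⟨k, hk⟩ := Exec.exists_iterate_eq h2 (hDecr 1)
    exact iterate_one_ne_zero_of_forall_exists_iterate_eq_succ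
      (fun s => Exec.exists_iterate_eq h1 (hIncr s)) k hk
  refine ⟨hno, fun hle => hno ?_⟩
  obtain ⟨P1, hP1, hIncr⟩ := hle 1 Incr (by simp [Counter])
  obtain ⟨P2, hP2, hDecr⟩ := hle 2 Decr (by simp [Counter])
  exact ⟨P1, P2, hP1, hP2, hIncr, hDecr⟩
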